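/- arXiv:1909.00635 — 3 statements merged into one kernel-verified Lean document; each statement's English description precedes it below -/
import Mathlib

section
/- Let λ > -1/2, -1 < s < 1, and k ≥ 2 an integer. Then ∫_{-1}^{1} |x-s| (1-x²)^{λ-1/2} C_k^λ(x) dx = (8λ(λ+1) / (k(k-1)(k+2λ)(k+2λ+1))) (1-s²)^{λ+3/2} C_{k-2}^{λ+2}(s). -/
open scoped Real BigOperators

/-- Pochhammer symbol `(lam)_m`. -/
noncomputable def poch (lam : ℝ) (m : ℕ) : ℝ := (ascPochhammer ℝ m).eval lam

/-- Gegenbauer polynomial `C_k^lam(x)`, via its explicit representation. -/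
noncomputable def gegen (lam : ℝ) (k : ℕ) (x : ℝ) : ℝ :=
  ∑ j ∈ Finset.range (k / 2 + 1),
    (-1 : ℝ) ^ j * poch lam (k - j) / ((Nat.factorial j : ℝ) * (Nat.factorial (k - 2 * j) : ℝ))
      * (2 * x) ^ (k - 2 * j)

/-!
The weight `(1 - x²)^{λ - 1/2} C_k^λ` is, up to the factor `-2λ / (k (k + 2λ))`, the derivative of
`(1 - x²)^{λ + 1/2} C_{k-1}^{λ+1}` (a Rodrigues-type lowering relation, checked coefficientwise on
the explicit sum), and that function is in turn a multiple of the derivative of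
`(1 - x²)^{λ + 3/2} C_{k-2}^{λ+2}`. Hence `(x - s)(1 - x²)^{λ - 1/2} C_k^λ` has an explicit
antiderivative `V`, a combination of `(x - s)(1 - x²)^{λ + 1/2} C_{k-1}^{λ+1}` and
`(1 - x²)^{λ + 3/2} C_{k-2}^{λ+2}`, which vanishes at `±1` because `λ > -1/2`. Splitting the
integral at `s` gives `V(-1) + V(1) - 2 V(s)`, and only the second summand of `V` survives at
`x = s`.
-/

open scoped Nat

open Finset Set MeasureTheory

lemma intervalIntegrable_one_sub_sq_rpow {r : ℝ} (hr : -1 < r) :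
    IntervalIntegrable (fun x : ℝ => (1 - x ^ 2) ^ r) volume (-1) 1 := by
  have hright : IntervalIntegrable (fun x : ℝ => (1 - x ^ 2) ^ r) volume 0 1 := by
    have hsing : IntervalIntegrable (fun x : ℝ => (1 - x) ^ r) volume 0 1 := by
      simpa using (intervalIntegral.intervalIntegrable_rpow' hr (a := 1) (b := 0)).comp_sub_left 1
    have hreg : ContinuousOn (fun x : ℝ => (1 + x) ^ r) (uIcc 0 1) :=
      ContinuousOn.rpow_const (by fun_prop) fun x hx => Or.inl (by
        rw [Set.uIcc_of_le zero_le_one] at hx; linarith [hx.1])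
    refine (hsing.mul_continuousOn hreg).congr fun x hx => ?_
    rw [uIoc_of_le zero_le_one] at hx
    rw [← Real.mul_rpow (by linarith [hx.2]) (by linarith [hx.1])]
    congr 1
    ring
  have hleft : IntervalIntegrable (fun x : ℝ => (1 - x ^ 2) ^ r) volume (-1) 0 := by
    rw [IntervalIntegrable.iff_comp_neg]
    simpa using hright.symm
  exact hleft.trans hright

lemma hasDerivAt_one_sub_sq_rpow (q : ℝ) {x : ℝ} (hx : x ∈ Ioo (-1 : ℝ) 1) :
    HasDerivAt (fun y : ℝ => (1 - y ^ 2) ^ q) (q * (1 - x ^ 2) ^ (q - 1) * -(2 * x)) x := by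
  have hpos : 0 < 1 - x ^ 2 := by nlinarith [hx.1, hx.2]
  exact (Real.hasDerivAt_rpow_const (Or.inl hpos.ne')).comp x
    (by simpa using (hasDerivAt_pow 2 x).const_sub 1)

lemma integral_abs_sub_mul_eq {a b s : ℝ} {f V : ℝ → ℝ} (has : a ≤ s) (hsb : s ≤ b)
    (hV : ContinuousOn V (Icc a b)) (hV' : ∀ x ∈ Ioo a b, HasDerivAt V ((x - s) * f x) x)
    (hf : IntervalIntegrable (fun x => (x - s) * f x) volume a b) :
    ∫ x in a..b, |x - s| * f x = V a + V b - 2 * V s := by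
  have hleft : EqOn (fun x => |x - s| * f x) (fun x => -((x - s) * f x)) (uIcc a s) := by
    intro x hx
    rw [uIcc_of_le has] at hx
    simp only [abs_of_nonpos (sub_nonpos.mpr hx.2)]
    ring
  have hright : EqOn (fun x => |x - s| * f x) (fun x => (x - s) * f x) (uIcc s b) := by
    intro x hx
    rw [uIcc_of_le hsb] at hx
    simp only [abs_of_nonneg (sub_nonneg.mpr hx.1)]
  have hfl : IntervalIntegrable (fun x => (x - s) * f x) volume a s :=
    hf.mono_set (uIcc_subset_uIcc_left (by simp [uIcc_of_le (has.trans hsb), has, hsb]))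
  have hfr : IntervalIntegrable (fun x => (x - s) * f x) volume s b :=
    hf.mono_set (uIcc_subset_uIcc_right (by simp [uIcc_of_le (has.trans hsb), has, hsb]))
  have ftcl := intervalIntegral.integral_eq_sub_of_hasDerivAt_of_le has
    (hV.mono (Icc_subset_Icc_right hsb)) (fun x hx => hV' x ⟨hx.1, hx.2.trans_le hsb⟩) hfl
  have ftcr := intervalIntegral.integral_eq_sub_of_hasDerivAt_of_le hsb
    (hV.mono (Icc_subset_Icc_left has)) (fun x hx => hV' x ⟨has.trans_lt hx.1, hx.2⟩) hfr
  rw [← intervalIntegral.integral_add_adjacent_intervals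
      (hfl.neg.congr (hleft.symm.mono Ioc_subset_Icc_self))
      (hfr.congr (hright.symm.mono Ioc_subset_Icc_self)),
    intervalIntegral.integral_congr hleft, intervalIntegral.integral_congr hright,
    intervalIntegral.integral_neg, ftcl, ftcr]
  ring

lemma poch_succ_left (lam : ℝ) (m : ℕ) : poch lam (m + 1) = lam * poch (lam + 1) m := by
  simp [poch, ascPochhammer_succ_left, Polynomial.eval_comp]

lemma poch_succ_right (lam : ℝ) (m : ℕ) : poch lam (m + 1) = poch lam m * (lam + m) :=
  ascPochhammer_succ_eval m lam

noncomputable def gegenCoeff (lam : ℝ) (n j : ℕ) : ℝ :=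
  (-1 : ℝ) ^ j * poch lam (n - j) / ((j ! : ℝ) * ((n - 2 * j) ! : ℝ))

lemma gegen_eq_sum_gegenCoeff (lam : ℝ) (n : ℕ) (x : ℝ) :
    gegen lam n x = ∑ j ∈ range (n / 2 + 1), gegenCoeff lam n j * (2 * x) ^ (n - 2 * j) := rfl

noncomputable def gegenDeriv (lam : ℝ) (n : ℕ) (x : ℝ) : ℝ :=
  ∑ j ∈ range (n / 2 + 1),
    gegenCoeff lam n j * (((n - 2 * j : ℕ) : ℝ) * (2 * x) ^ (n - 2 * j - 1) * 2)

lemma hasDerivAt_gegen (lam : ℝ) (n : ℕ) (x : ℝ) :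
    HasDerivAt (gegen lam n) (gegenDeriv lam n x) x := by
  have h2x : HasDerivAt (fun y : ℝ => 2 * y) 2 x := by simpa using (hasDerivAt_id x).const_mul 2
  exact HasDerivAt.fun_sum fun j _ => (h2x.pow (n - 2 * j)).const_mul (gegenCoeff lam n j)

lemma continuous_gegen (lam : ℝ) (n : ℕ) : Continuous (gegen lam n) := by
  unfold gegen; fun_prop

def loweringConst (μ : ℝ) (n : ℕ) : ℝ := ((n : ℝ) + 1) * ((n : ℝ) + 2 * μ + 1)

lemma loweringConst_pos {μ : ℝ} (hμ : -1 / 2 < μ) (n : ℕ) : 0 < loweringConst μ n := by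
  have hn : (0 : ℝ) ≤ n := n.cast_nonneg
  exact mul_pos (by linarith) (by linarith)

section LoweringIdentity

variable (μ : ℝ) (n : ℕ) (x : ℝ)

/-- Applying `2μ ((1 - x²) d/dx - (2μ + 1) x)` to the `j`-th monomial of `C_n^{μ+1}` gives
`lowerTerm j + raiseTerm j`, of degrees `n - 2j - 1` and `n - 2j + 1`. -/
noncomputable def lowerTerm (j : ℕ) : ℝ :=
  4 * μ * ((n - 2 * j : ℕ) : ℝ) * gegenCoeff (μ + 1) n j * (2 * x) ^ (n - 2 * j - 1)

noncomputable def raiseTerm (j : ℕ) : ℝ :=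
  -(μ * (((n - 2 * j : ℕ) : ℝ) + 2 * μ + 1)) * gegenCoeff (μ + 1) n j * (2 * x) ^ (n - 2 * j + 1)

noncomputable def targetTerm (j : ℕ) : ℝ :=
  -loweringConst μ n * gegenCoeff μ (n + 1) j * (2 * x) ^ (n + 1 - 2 * j)

lemma lowering_gegen_eq_sum :
    2 * μ * ((1 - x ^ 2) * gegenDeriv (μ + 1) n x - (2 * μ + 1) * (x * gegen (μ + 1) n x))
      = ∑ j ∈ range (n / 2 + 1), (lowerTerm μ n x j + raiseTerm μ n x j) := by
  rw [gegen_eq_sum_gegenCoeff, gegenDeriv, mul_sum, mul_sum, mul_sum, ← sum_sub_distrib, mul_sum]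
  refine sum_congr rfl fun j _ => ?_
  unfold lowerTerm raiseTerm
  rcases n - 2 * j with _ | d
  · simp only [CharP.cast_eq_zero, zero_add, pow_one]
    ring
  · push_cast
    rw [pow_succ, pow_succ]
    ring

lemma raiseTerm_zero : raiseTerm μ n x 0 = targetTerm μ n x 0 := by
  have hfact : ((n + 1) ! : ℝ) = (n + 1) * n ! := by push_cast [Nat.factorial_succ]; ring
  simp only [raiseTerm, targetTerm, loweringConst, gegenCoeff, Nat.mul_zero, Nat.sub_zero, poch_succ_left, hfact]
  field_simp

lemma lowerTerm_add_raiseTerm_succ {j : ℕ} (hj : 2 * (j + 1) ≤ n) :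
    lowerTerm μ n x j + raiseTerm μ n x (j + 1) = targetTerm μ n x (j + 1) := by
  obtain ⟨d, rfl⟩ : ∃ d, n = 2 * (j + 1) + d := ⟨n - 2 * (j + 1), by omega⟩
  unfold lowerTerm raiseTerm targetTerm loweringConst gegenCoeff
  rw [show 2 * (j + 1) + d - 2 * j - 1 = d + 1 by omega,
    show 2 * (j + 1) + d - 2 * j = d + 2 by omega,
    show 2 * (j + 1) + d - j = (j + d + 1) + 1 by omega,
    show 2 * (j + 1) + d - 2 * (j + 1) = d by omega,
    show 2 * (j + 1) + d - (j + 1) = j + d + 1 by omega,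
    show 2 * (j + 1) + d + 1 - 2 * (j + 1) = d + 1 by omega,
    show 2 * (j + 1) + d + 1 - (j + 1) = (j + d + 1) + 1 by omega,
    poch_succ_left μ, poch_succ_right (μ + 1)]
  simp only [Nat.factorial_succ]
  push_cast
  field_simp
  ring

lemma lowerTerm_odd_last (p : ℕ) :
    lowerTerm μ (2 * p + 1) x p = targetTerm μ (2 * p + 1) x (p + 1) := by
  unfold lowerTerm targetTerm loweringConst gegenCoeff
  rw [show 2 * p + 1 - 2 * p - 1 = 0 by omega, show 2 * p + 1 - 2 * p = 1 by omega,
    show 2 * p + 1 - p = p + 1 by omega, show 2 * p + 1 + 1 - 2 * (p + 1) = 0 by omega,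
    show 2 * p + 1 + 1 - (p + 1) = p + 1 by omega, poch_succ_left μ, poch_succ_right (μ + 1)]
  simp only [Nat.factorial_succ]
  push_cast
  field_simp
  ring

lemma lowerTerm_even_last (p : ℕ) : lowerTerm μ (2 * p) x p = 0 := by
  simp [lowerTerm]

end LoweringIdentity

lemma lowering_gegen (μ : ℝ) (n : ℕ) (x : ℝ) :
    2 * μ * ((1 - x ^ 2) * gegenDeriv (μ + 1) n x - (2 * μ + 1) * (x * gegen (μ + 1) n x))
      = -loweringConst μ n * gegen μ (n + 1) x := by
  have htarget : -loweringConst μ n * gegen μ (n + 1) x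
      = ∑ j ∈ range ((n + 1) / 2 + 1), targetTerm μ n x j := by
    rw [gegen_eq_sum_gegenCoeff, mul_sum]
    exact sum_congr rfl fun j _ => by unfold targetTerm; ring
  have hinner (p : ℕ) (hp : 2 * p ≤ n) :
      ∑ j ∈ range p, (lowerTerm μ n x j + raiseTerm μ n x (j + 1))
      = ∑ j ∈ range p, targetTerm μ n x (j + 1) :=
    sum_congr rfl fun j hj => lowerTerm_add_raiseTerm_succ μ n x (by rw [Finset.mem_range] at hj; omega)
  rw [lowering_gegen_eq_sum, htarget, sum_add_distrib]
  obtain ⟨p, rfl | rfl⟩ := Nat.even_or_odd' n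
  · rw [show 2 * p / 2 = p by omega, show (2 * p + 1) / 2 = p by omega, sum_range_succ,
      sum_range_succ', sum_range_succ', lowerTerm_even_last, raiseTerm_zero, ← hinner p le_rfl,
      sum_add_distrib]
    ring
  · rw [show (2 * p + 1) / 2 = p by omega, show (2 * p + 1 + 1) / 2 = p + 1 by omega,
      sum_range_succ, sum_range_succ', sum_range_succ, sum_range_succ', lowerTerm_odd_last,
      raiseTerm_zero, ← hinner p (by omega), sum_add_distrib]
    ring

noncomputable def weightedGegen (μ : ℝ) (n : ℕ) (y : ℝ) : ℝ :=
  (1 - y ^ 2) ^ (μ + 1 / 2) * gegen (μ + 1) n y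

lemma hasDerivAt_weightedGegen (μ : ℝ) (n : ℕ) {x : ℝ} (hx : x ∈ Ioo (-1 : ℝ) 1) :
    HasDerivAt (fun y => 2 * μ * weightedGegen μ n y)
      (-loweringConst μ n * ((1 - x ^ 2) ^ (μ - 1 / 2) * gegen μ (n + 1) x)) x := by
  have hpos : 0 < 1 - x ^ 2 := by nlinarith [hx.1, hx.2]
  refine (((hasDerivAt_one_sub_sq_rpow _ hx).mul (hasDerivAt_gegen (μ + 1) n x)).const_mul
    (2 * μ)).congr_deriv ?_
  rw [show μ + 1 / 2 - 1 = μ - 1 / 2 by ring,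
    show μ + 1 / 2 = (μ - 1 / 2) + 1 by ring, Real.rpow_add_one hpos.ne']
  linear_combination (1 - x ^ 2) ^ (μ - 1 / 2) * lowering_gegen μ n x

lemma continuous_weightedGegen {μ : ℝ} (hμ : -1 / 2 < μ) (n : ℕ) :
    Continuous (weightedGegen μ n) :=
  ((continuous_const.sub (continuous_pow 2)).rpow_const fun _ => Or.inr (by linarith)).mul
    (continuous_gegen _ n)

lemma weightedGegen_eq_zero_of_sq_eq_one {μ : ℝ} (hμ : -1 / 2 < μ) (n : ℕ) {y : ℝ}
    (hy : y ^ 2 = 1) : weightedGegen μ n y = 0 := by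
  rw [weightedGegen, hy, sub_self, Real.zero_rpow (by linarith), zero_mul]

/-- The derivative of the second term cancels the product-rule term
`(1 - y²)^{λ + 1/2} C_{m+1}^{λ+1}` of the first. -/
noncomputable def absAntideriv (lam s : ℝ) (m : ℕ) (y : ℝ) : ℝ :=
  -(1 / loweringConst lam (m + 1)) * ((y - s) * (2 * lam * weightedGegen lam (m + 1) y))
    - 2 * lam / (loweringConst lam (m + 1) * loweringConst (lam + 1) m)
      * (2 * (lam + 1) * weightedGegen (lam + 1) m y)

section Antiderivative

variable {lam : ℝ} (s : ℝ) (m : ℕ)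

lemma hasDerivAt_absAntideriv (hlam : -1 / 2 < lam) {x : ℝ} (hx : x ∈ Ioo (-1 : ℝ) 1) :
    HasDerivAt (absAntideriv lam s m)
      ((x - s) * ((1 - x ^ 2) ^ (lam - 1 / 2) * gegen lam (m + 2) x)) x := by
  have hA := (loweringConst_pos hlam (m + 1)).ne'
  have hB := (loweringConst_pos (by linarith : -1 / 2 < lam + 1) m).ne'
  have hF := hasDerivAt_weightedGegen lam (m + 1) hx
  have hG := hasDerivAt_weightedGegen (lam + 1) m hx
  rw [show lam + 1 - 1 / 2 = lam + 1 / 2 by ring, ← weightedGegen] at hG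
  refine ((((hasDerivAt_id' x).sub_const s).mul hF).const_mul _ |>.sub
    (hG.const_mul _)).congr_deriv ?_
  field_simp
  ring

lemma continuous_absAntideriv (hlam : -1 / 2 < lam) : Continuous (absAntideriv lam s m) := by
  have := continuous_weightedGegen hlam (m + 1)
  have := continuous_weightedGegen (by linarith : -1 / 2 < lam + 1) m
  unfold absAntideriv
  fun_prop

lemma absAntideriv_eq_zero_of_sq_eq_one (hlam : -1 / 2 < lam) {y : ℝ} (hy : y ^ 2 = 1) :
    absAntideriv lam s m y = 0 := by
  rw [absAntideriv, weightedGegen_eq_zero_of_sq_eq_one hlam _ hy,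
    weightedGegen_eq_zero_of_sq_eq_one (by linarith) _ hy]
  ring

lemma absAntideriv_self :
    absAntideriv lam s m s = -(4 * lam * (lam + 1) / (loweringConst lam (m + 1) *
      loweringConst (lam + 1) m)) * ((1 - s ^ 2) ^ (lam + 3 / 2) * gegen (lam + 2) m s) := by
  simp only [absAntideriv, weightedGegen]
  rw [show lam + 1 + 1 / 2 = lam + 3 / 2 by ring,
    show lam + 1 + 1 = lam + 2 by ring]
  ring

end Antiderivative

theorem gegenbauer_abs_integral (lam s : ℝ) (hlam : -1/2 < lam) (hs : -1 < s) (hs' : s < 1)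
    (k : ℕ) (hk : 2 ≤ k) :
    ∫ x in (-1:ℝ)..1, |x - s| * (1 - x^2) ^ (lam - 1/2) * gegen lam k x
      = 8 * lam * (lam + 1)
          / ((k : ℝ) * ((k : ℝ) - 1) * ((k : ℝ) + 2*lam) * ((k : ℝ) + 2*lam + 1))
        * (1 - s^2) ^ (lam + 3/2) * gegen (lam + 2) (k - 2) s := by
  obtain ⟨m, rfl⟩ : ∃ m, k = m + 2 := ⟨k - 2, by omega⟩
  have hf : IntervalIntegrable
      (fun x => (x - s) * ((1 - x ^ 2) ^ (lam - 1 / 2) * gegen lam (m + 2) x)) volume (-1) 1 := by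
    have hg : Continuous fun x => (x - s) * gegen lam (m + 2) x := by
      have := continuous_gegen lam (m + 2)
      fun_prop
    refine ((intervalIntegrable_one_sub_sq_rpow (r := lam - 1 / 2) (by linarith)).mul_continuousOn
      hg.continuousOn).congr fun x _ => ?_
    ring
  have hden : ((m + 2 : ℕ) : ℝ) * (((m + 2 : ℕ) : ℝ) - 1) * (((m + 2 : ℕ) : ℝ) + 2 * lam)
      * (((m + 2 : ℕ) : ℝ) + 2 * lam + 1)
      = loweringConst lam (m + 1) * loweringConst (lam + 1) m := by
    simp only [loweringConst]
    push_cast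
    ring
  calc _ = ∫ x in (-1 : ℝ)..1, |x - s| * ((1 - x ^ 2) ^ (lam - 1 / 2) * gegen lam (m + 2) x) := by
        simp only [mul_assoc]
    _ = absAntideriv lam s m (-1) + absAntideriv lam s m 1 - 2 * absAntideriv lam s m s :=
        integral_abs_sub_mul_eq hs.le hs'.le (continuous_absAntideriv s m hlam).continuousOn
          (fun x hx => hasDerivAt_absAntideriv s m hlam hx) hf
    _ = _ := by
        rw [absAntideriv_eq_zero_of_sq_eq_one s m hlam (by norm_num),
          absAntideriv_eq_zero_of_sq_eq_one s m hlam (by norm_num), absAntideriv_self, hden,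
          Nat.add_sub_cancel]
        ring
end

section
/- Fix an integer n ≥ 3, 0 < ρ < 1, δ = ((n-2)/n)ρ, and real t, z with -1 < t, z < 1 and 1 - δ²t² - t² - z² + 2δt²z > 0. Let Q := 1 - δ²t² - t² - z² + 2δt²z, A := (1-2ρz+ρ²)(1-t²). Then the expression A² − (2n/(n-2)) A Q + (n²/(n-2)²) Q² = (A − (n/(n-2)) Q)² is nonnegative; consequently the function L(t,z) := 2(1-δ²t²)^{(n-3)/2}(1-2ρz+ρ²)^{-(n-2)/2} K̃_{(n-2)/2}(δt,t,z) − (4n/(n-1))(1-δ²t²)^{(n-1)/2}(1-2ρz+ρ²)^{-n/2} K̃_{n/2}(δt,t,z) + (2n³/((n+1)(n-1)(n-2)))(1-δ²t²)^{(n+1)/2}(1-2ρz+ρ²)^{-(n+2)/2} K̃_{(n+2)/2}(δt,t,z) is nonnegative on the region Ω = {(t,z) ∈ (-1,1)² : Q > 0}. -/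
open scoped Real BigOperators

/-- The (unextended) kernel in the variant of Gegenbauer's product formula. -/
noncomputable def Ktilde (lam x y z : ℝ) : ℝ :=
  Real.Gamma (lam + 1/2) / (Real.Gamma lam * Real.Gamma (1/2))
    * (1 - x^2 - y^2 - z^2 + 2*x*y*z) ^ (lam - 1)
    / ((1 - x^2) ^ (lam - 1/2) * (1 - y^2) ^ (lam - 1/2))

/-!
Writing `D(x, y, z) = 1 - x² - y² - z² + 2xyz`, the recurrence `Γ(s + 1) = s Γ(s)` gives
`K̃_{λ+1}(x, y, z) = (λ + 1/2)/λ · K̃_λ(x, y, z) · D / ((1 - x²)(1 - y²))`.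
Applied twice with `λ = (n - 2)/2`, `x = δt`, `y = t`, and using `D(δt, t, z) = Q`, it factors `L` as
`2 (1 - δ²t²)^((n-3)/2) (1 - 2ρz + ρ²)^(-(n-2)/2) K̃_λ / A²` times
`A² - (2n/(n-2)) A Q + (n²/(n-2)²) Q² = (A - n Q/(n-2))²`.
The prefactor is positive because `Q > 0` and `|t| < 1` force `|δt| < 1` and `|z| < 1`.
-/

/- `D(x, y, z)` is the Gram determinant of three unit vectors with pairwise inner products `x, y, z`;
it equals `(1 - y²)(1 - x²) - (z - xy)²` and `(1 - y²)(1 - z²) - (x - yz)²`. -/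
lemma one_sub_sq_pos_of_gramDet_pos {x y z : ℝ} (hD : 0 < 1 - x^2 - y^2 - z^2 + 2*x*y*z)
    (hy : 0 < 1 - y^2) : 0 < 1 - x^2 ∧ 0 < 1 - z^2 := by
  have hxy : 0 < (1 - y^2) * (1 - x^2) := by nlinarith [sq_nonneg (z - x*y)]
  have hyz : 0 < (1 - y^2) * (1 - z^2) := by nlinarith [sq_nonneg (x - y*z)]
  exact ⟨(pos_iff_pos_of_mul_pos hxy).1 hy, (pos_iff_pos_of_mul_pos hyz).1 hy⟩

lemma Ktilde_pos {lam x y z : ℝ} (hlam : 0 < lam) (hD : 0 < 1 - x^2 - y^2 - z^2 + 2*x*y*z)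
    (hx : 0 < 1 - x^2) (hy : 0 < 1 - y^2) : 0 < Ktilde lam x y z := by
  unfold Ktilde
  have := Real.Gamma_pos_of_pos hlam
  have := Real.Gamma_pos_of_pos (show (0:ℝ) < 1/2 by norm_num)
  have := Real.Gamma_pos_of_pos (show 0 < lam + 1/2 by positivity)
  have := Real.rpow_pos_of_pos hD (lam - 1)
  have := Real.rpow_pos_of_pos hx (lam - 1/2)
  have := Real.rpow_pos_of_pos hy (lam - 1/2)
  positivity

lemma Ktilde_add_one {lam x y z : ℝ} (hlam : 0 < lam) (hD : 1 - x^2 - y^2 - z^2 + 2*x*y*z ≠ 0)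
    (hx : 1 - x^2 ≠ 0) (hy : 1 - y^2 ≠ 0) :
    Ktilde (lam + 1) x y z = (lam + 1/2) / lam * Ktilde lam x y z
      * ((1 - x^2 - y^2 - z^2 + 2*x*y*z) / ((1 - x^2) * (1 - y^2))) := by
  unfold Ktilde
  rw [show lam + 1 + 1/2 = lam + 1/2 + 1 by ring, Real.Gamma_add_one (by positivity),
    Real.Gamma_add_one hlam.ne', add_sub_right_comm, Real.rpow_add_one hD,
    show lam + 1 - 1/2 = lam - 1/2 + 1 by ring, Real.rpow_add_one hx, Real.rpow_add_one hy]
  field_simp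

lemma Ktilde_three_term_eq {N s x y z : ℝ} (hN : 2 < N) (hs : 0 < s)
    (hD : 0 < 1 - x^2 - y^2 - z^2 + 2*x*y*z) (hy : 0 < 1 - y^2) :
    2*(1 - x^2) ^ ((N - 3)/2) * s ^ (-((N - 2)/2)) * Ktilde ((N - 2)/2) x y z
        - 4*N/(N - 1) * (1 - x^2) ^ ((N - 1)/2) * s ^ (-(N/2)) * Ktilde (N/2) x y z
        + 2*N^3/((N + 1)*(N - 1)*(N - 2)) * (1 - x^2) ^ ((N + 1)/2)
          * s ^ (-((N + 2)/2)) * Ktilde ((N + 2)/2) x y z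
      = 2*(1 - x^2) ^ ((N - 3)/2) * s ^ (-((N - 2)/2)) * Ktilde ((N - 2)/2) x y z
          / (s * (1 - y^2))^2
        * ((s * (1 - y^2))^2 - 2*N/(N - 2)*(s * (1 - y^2))*(1 - x^2 - y^2 - z^2 + 2*x*y*z)
          + N^2/(N - 2)^2*(1 - x^2 - y^2 - z^2 + 2*x*y*z)^2) := by
  have hx := (one_sub_sq_pos_of_gramDet_pos hD hy).1
  have hlam : 0 < (N - 2)/2 := by linarith
  have hK1 : Ktilde (N/2) x y z = (N - 1)/(N - 2) * Ktilde ((N - 2)/2) x y z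
      * ((1 - x^2 - y^2 - z^2 + 2*x*y*z) / ((1 - x^2) * (1 - y^2))) := by
    rw [show N/2 = (N - 2)/2 + 1 by ring, Ktilde_add_one hlam hD.ne' hx.ne' hy.ne']
    congr 2
    field_simp
    ring
  have hK2 : Ktilde ((N + 2)/2) x y z = (N + 1)/N * Ktilde (N/2) x y z
      * ((1 - x^2 - y^2 - z^2 + 2*x*y*z) / ((1 - x^2) * (1 - y^2))) := by
    rw [show (N + 2)/2 = N/2 + 1 by ring, Ktilde_add_one (by linarith) hD.ne' hx.ne' hy.ne']
    congr 2
    field_simp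
  have hx1 : (1 - x^2) ^ ((N - 1)/2) = (1 - x^2) ^ ((N - 3)/2) * (1 - x^2) := by
    rw [← Real.rpow_add_one hx.ne']; ring_nf
  have hx2 : (1 - x^2) ^ ((N + 1)/2) = (1 - x^2) ^ ((N - 3)/2) * (1 - x^2)^2 := by
    rw [← Real.rpow_add_natCast hx.ne']; push_cast; ring_nf
  have hs1 : s ^ (-(N/2)) = s ^ (-((N - 2)/2)) / s := by
    rw [← Real.rpow_sub_one hs.ne']; ring_nf
  have hs2 : s ^ (-((N + 2)/2)) = s ^ (-((N - 2)/2)) / s^2 := by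
    rw [← Real.rpow_sub_natCast hs.ne']; push_cast; ring_nf
  rw [hK2, hK1, hx1, hx2, hs1, hs2]
  have : N - 1 ≠ 0 := by linarith
  have : N - 2 ≠ 0 := by linarith
  have : N + 1 ≠ 0 := by linarith
  field_simp
  ring

theorem L_nonneg_general (n : ℕ) (hn : 3 ≤ n) (ρ δ : ℝ) (t z : ℝ)
    (ht : -1 < t) (ht' : t < 1)
    (Q A : ℝ) (hQdef : Q = 1 - δ^2*t^2 - t^2 - z^2 + 2*δ*t^2*z)
    (hA : A = (1 - 2*ρ*z + ρ^2)*(1 - t^2)) (hQ : 0 < Q) :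
    (A^2 - 2*(n:ℝ)/((n:ℝ) - 2)*A*Q + (n:ℝ)^2/((n:ℝ) - 2)^2*Q^2
        = (A - (n:ℝ)/((n:ℝ) - 2)*Q)^2) ∧
    0 ≤ 2*(1 - δ^2*t^2) ^ (((n:ℝ) - 3)/2) * (1 - 2*ρ*z + ρ^2) ^ (-(((n:ℝ) - 2)/2))
          * Ktilde (((n:ℝ) - 2)/2) (δ*t) t z
        - 4*(n:ℝ)/((n:ℝ) - 1) * (1 - δ^2*t^2) ^ (((n:ℝ) - 1)/2)
          * (1 - 2*ρ*z + ρ^2) ^ (-((n:ℝ)/2)) * Ktilde ((n:ℝ)/2) (δ*t) t z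
        + 2*(n:ℝ)^3/(((n:ℝ) + 1)*((n:ℝ) - 1)*((n:ℝ) - 2))
          * (1 - δ^2*t^2) ^ (((n:ℝ) + 1)/2)
          * (1 - 2*ρ*z + ρ^2) ^ (-(((n:ℝ) + 2)/2)) * Ktilde (((n:ℝ) + 2)/2) (δ*t) t z := by
  have hN : (2:ℝ) < n := by
    have : (3:ℝ) ≤ n := by exact_mod_cast hn
    linarith
  have hsq : A^2 - 2*(n:ℝ)/((n:ℝ) - 2)*A*Q + (n:ℝ)^2/((n:ℝ) - 2)^2*Q^2
      = (A - (n:ℝ)/((n:ℝ) - 2)*Q)^2 := by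
    rw [← div_pow]; ring
  refine ⟨hsq, ?_⟩
  have hDQ : 1 - (δ*t)^2 - t^2 - z^2 + 2*(δ*t)*t*z = Q := by rw [hQdef]; ring
  have hD : 0 < 1 - (δ*t)^2 - t^2 - z^2 + 2*(δ*t)*t*z := hDQ ▸ hQ
  have ht2 : 0 < 1 - t^2 := by nlinarith
  obtain ⟨hx, hz⟩ := one_sub_sq_pos_of_gramDet_pos hD ht2
  have hs : 0 < 1 - 2*ρ*z + ρ^2 := by nlinarith [sq_nonneg (ρ - z), hz]
  rw [show 1 - δ^2*t^2 = 1 - (δ*t)^2 by ring, Ktilde_three_term_eq hN hs hD ht2, hDQ, ← hA, hsq]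
  have := Ktilde_pos (by linarith : 0 < ((n:ℝ) - 2)/2) hD hx ht2
  have := Real.rpow_pos_of_pos hx (((n:ℝ) - 3)/2)
  have := Real.rpow_pos_of_pos hs (-(((n:ℝ) - 2)/2))
  positivity

theorem L_nonneg (n : ℕ) (hn : 3 ≤ n) (ρ δ : ℝ) (hρ : 0 < ρ) (hρ' : ρ < 1)
    (hδ : δ = ((n:ℝ) - 2)/(n:ℝ) * ρ) (t z : ℝ)
    (ht : -1 < t) (ht' : t < 1) (hz : -1 < z) (hz' : z < 1)
    (Q A : ℝ) (hQdef : Q = 1 - δ^2*t^2 - t^2 - z^2 + 2*δ*t^2*z)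
    (hA : A = (1 - 2*ρ*z + ρ^2)*(1 - t^2)) (hQ : 0 < Q) :
    (A^2 - 2*(n:ℝ)/((n:ℝ) - 2)*A*Q + (n:ℝ)^2/((n:ℝ) - 2)^2*Q^2
        = (A - (n:ℝ)/((n:ℝ) - 2)*Q)^2) ∧
    0 ≤ 2*(1 - δ^2*t^2) ^ (((n:ℝ) - 3)/2) * (1 - 2*ρ*z + ρ^2) ^ (-(((n:ℝ) - 2)/2))
          * Ktilde (((n:ℝ) - 2)/2) (δ*t) t z
        - 4*(n:ℝ)/((n:ℝ) - 1) * (1 - δ^2*t^2) ^ (((n:ℝ) - 1)/2)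
          * (1 - 2*ρ*z + ρ^2) ^ (-((n:ℝ)/2)) * Ktilde ((n:ℝ)/2) (δ*t) t z
        + 2*(n:ℝ)^3/(((n:ℝ) + 1)*((n:ℝ) - 1)*((n:ℝ) - 2))
          * (1 - δ^2*t^2) ^ (((n:ℝ) + 1)/2)
          * (1 - 2*ρ*z + ρ^2) ^ (-(((n:ℝ) + 2)/2)) * Ktilde (((n:ℝ) + 2)/2) (δ*t) t z :=
  L_nonneg_general n hn ρ δ t z ht ht' Q A hQdef hA hQ
end

section
/- Fix an integer n ≥ 3, 0 < ρ < 1, and set δ = ((n-2)/n)ρ. Define G(t) := (n-2)ρt ∫_{-1}^{1} |δt - x|(1-x²)^{(n-3)/2} x dx for t ∈ (-1,1). Then G is twice differentiable on (-1,1) with G''(t) = 2(n-2)ρδ³t²(1-δ²t²)^{(n-3)/2} − (4(n-2)/(n-1))ρδ(1-δ²t²)^{(n-1)/2}. -/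
/-! Splitting `Φ(a) = ∫_{-1}^1 |a - y| f(y) dy` at `y = a` and applying the fundamental theorem
of calculus to each piece shows that `Φ'(a) = ∫_{-1}^a f - ∫_a^1 f` for `a ∈ (-1, 1)`. For
`f(y) = (1 - y²)^p y` this is the explicit function `-(1 - a²)^(p+1) / (p+1)`, whose derivative
is `2 f(a)`. Since `G(t) = c t Φ(δ t)` with `c = (n-2)ρ`, `p = (n-3)/2` and `0 ≤ δ ≤ 1`, the
product and chain rules give `G''(t) = 2 c δ Φ'(δ t) + c δ² t Φ''(δ t)`. -/

open scoped Real BigOperators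

open Set Topology intervalIntegral

section AbsKernel

variable {f : ℝ → ℝ} {a b : ℝ}

theorem integral_abs_sub_mul_eq_s13 (hf : Continuous f) {x : ℝ} (hx : x ∈ Icc a b) :
    ∫ y in a..b, |x - y| * f y
      = x * (∫ y in a..x, f y) - (∫ y in a..x, y * f y)
        + ((∫ y in x..b, y * f y) - x * ∫ y in x..b, f y) := by
  have hint : ∀ c d, IntervalIntegrable (fun y => |x - y| * f y) MeasureTheory.volume c d :=
    fun c d => (by fun_prop : Continuous fun y => |x - y| * f y).intervalIntegrable c d
  have hf' : ∀ c d, IntervalIntegrable (fun y => y * f y) MeasureTheory.volume c d :=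
    fun c d => (by fun_prop : Continuous fun y => y * f y).intervalIntegrable c d
  rw [← integral_add_adjacent_intervals (hint a x) (hint x b), ← integral_const_mul,
    ← integral_const_mul, ← integral_sub ((hf.intervalIntegrable a x).const_mul x) (hf' a x),
    ← integral_sub (hf' x b) ((hf.intervalIntegrable x b).const_mul x)]
  congr 1 <;> refine integral_congr fun y hy => ?_
  · rw [uIcc_of_le hx.1] at hy
    simp only [abs_of_nonneg (sub_nonneg.2 hy.2)]
    ring
  · rw [uIcc_of_le hx.2] at hy
    simp only [abs_of_nonpos (sub_nonpos.2 hy.1)]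
    ring

theorem hasDerivAt_integral_abs_sub_mul (hf : Continuous f) {x : ℝ} (hx : x ∈ Ioo a b) :
    HasDerivAt (fun x => ∫ y in a..b, |x - y| * f y)
      ((∫ y in a..x, f y) - ∫ y in x..b, f y) x := by
  have hright : ∀ c, HasDerivAt (fun u => ∫ y in c..u, f y) (f x) x :=
    fun c => (hf.integral_hasStrictDerivAt c x).hasDerivAt
  have hleft : ∀ c, HasDerivAt (fun u => ∫ y in u..c, f y) (-f x) x := fun c =>
    integral_hasDerivAt_left (hf.intervalIntegrable x c) (hf.stronglyMeasurableAtFilter _ _)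
      hf.continuousAt
  have hxf : Continuous fun y => y * f y := by fun_prop
  have hright' : ∀ c, HasDerivAt (fun u => ∫ y in c..u, y * f y) (x * f x) x :=
    fun c => (hxf.integral_hasStrictDerivAt c x).hasDerivAt
  have hleft' : ∀ c, HasDerivAt (fun u => ∫ y in u..c, y * f y) (-(x * f x)) x := fun c =>
    integral_hasDerivAt_left (hxf.intervalIntegrable x c) (hxf.stronglyMeasurableAtFilter _ _)
      hxf.continuousAt
  have hsplit := ((((hasDerivAt_id x).mul (hright a)).sub (hright' a)).add
    ((hleft' b).sub ((hasDerivAt_id x).mul (hleft b))))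
  refine (hsplit.congr_of_eventuallyEq ?_).congr_deriv (by simp only [id]; ring)
  filter_upwards [Icc_mem_nhds hx.1 hx.2] with u hu
  exact integral_abs_sub_mul_eq_s13 hf hu

end AbsKernel

section Weight

variable {p : ℝ}

theorem continuous_one_sub_sq_rpow_mul_self (hp : 0 ≤ p) :
    Continuous fun y : ℝ => (1 - y ^ 2) ^ p * y :=
  ((by fun_prop : Continuous fun y : ℝ => 1 - y ^ 2).rpow_const fun _ => Or.inr hp).mul
    continuous_id

theorem hasDerivAt_one_sub_sq_rpow_succ (hp : 0 ≤ p) (y : ℝ) :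
    HasDerivAt (fun y : ℝ => (1 - y ^ 2) ^ (p + 1))
      (-(2 * (p + 1)) * ((1 - y ^ 2) ^ p * y)) y := by
  have h : HasDerivAt (fun y : ℝ => (1 - y ^ 2) ^ (p + 1))
      (-(2 * y) * (p + 1) * (1 - y ^ 2) ^ (p + 1 - 1)) y := by
    simpa using ((hasDerivAt_pow 2 y).const_sub 1).rpow_const (p := p + 1) (Or.inr (by linarith))
  rw [add_sub_cancel_right] at h
  exact h.congr_deriv (by ring)

theorem hasDerivAt_neg_one_sub_sq_rpow_succ_div (hp : 0 ≤ p) (y : ℝ) :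
    HasDerivAt (fun y : ℝ => -(1 - y ^ 2) ^ (p + 1) / (p + 1)) (2 * ((1 - y ^ 2) ^ p * y)) y :=
  have : p + 1 ≠ 0 := by positivity
  ((hasDerivAt_one_sub_sq_rpow_succ hp y).neg.div_const _).congr_deriv (by field_simp)

theorem integral_one_sub_sq_rpow_mul_self (hp : 0 ≤ p) (a b : ℝ) :
    ∫ y in a..b, (1 - y ^ 2) ^ p * y
      = ((1 - a ^ 2) ^ (p + 1) - (1 - b ^ 2) ^ (p + 1)) / (2 * (p + 1)) := by
  have hp1 : p + 1 ≠ 0 := by positivity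
  have hderiv : ∀ y ∈ uIcc a b,
      HasDerivAt (fun y : ℝ => -(1 - y ^ 2) ^ (p + 1) / (2 * (p + 1))) ((1 - y ^ 2) ^ p * y) y :=
    fun y _ => ((hasDerivAt_one_sub_sq_rpow_succ hp y).neg.div_const _).congr_deriv (by field_simp)
  rw [integral_eq_sub_of_hasDerivAt hderiv
    ((continuous_one_sub_sq_rpow_mul_self hp).intervalIntegrable a b)]
  ring

theorem hasDerivAt_integral_abs_sub_mul_one_sub_sq_rpow_mul_self (hp : 0 ≤ p) {a : ℝ}
    (ha : a ∈ Ioo (-1 : ℝ) 1) :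
    HasDerivAt (fun a => ∫ y in (-1 : ℝ)..1, |a - y| * ((1 - y ^ 2) ^ p * y))
      (-(1 - a ^ 2) ^ (p + 1) / (p + 1)) a := by
  refine (hasDerivAt_integral_abs_sub_mul (continuous_one_sub_sq_rpow_mul_self hp) ha).congr_deriv
    ?_
  have hp1 : p + 1 ≠ 0 := by positivity
  simp only [integral_one_sub_sq_rpow_mul_self hp, neg_one_sq, one_pow, sub_self,
    Real.zero_rpow hp1]
  field_simp
  ring

end Weight

section ScaledProduct

variable {Φ : ℝ → ℝ} {c δ t : ℝ}

theorem HasDerivAt.comp_const_mul {d : ℝ} (h : HasDerivAt Φ d (δ * t)) :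
    HasDerivAt (fun s => Φ (δ * s)) (δ * d) t := by
  have hδ : HasDerivAt (fun s => δ * s) δ t := by simpa using (hasDerivAt_id t).const_mul δ
  exact (h.comp t hδ).congr_deriv (mul_comm _ _)

theorem HasDerivAt.const_mul_self_mul_comp_const_mul {d : ℝ} (h : HasDerivAt Φ d (δ * t)) :
    HasDerivAt (fun s => c * s * Φ (δ * s)) (c * Φ (δ * t) + c * δ * t * d) t := by
  have hc : HasDerivAt (fun s => c * s) c t := by simpa using (hasDerivAt_id t).const_mul c
  exact (hc.mul h.comp_const_mul).congr_deriv (by ring)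

theorem hasDerivAt_deriv_const_mul_self_mul_comp_const_mul {ψ χ : ℝ → ℝ} {U : Set ℝ}
    (hU : IsOpen U) (hΦ : ∀ s ∈ U, HasDerivAt Φ (ψ (δ * s)) (δ * s))
    (hψ : ∀ s ∈ U, HasDerivAt ψ (χ (δ * s)) (δ * s)) (ht : t ∈ U) :
    HasDerivAt (deriv fun s => c * s * Φ (δ * s))
      (2 * c * δ * ψ (δ * t) + c * δ ^ 2 * t * χ (δ * t)) t := by
  have hderiv : (deriv fun s => c * s * Φ (δ * s))
      =ᶠ[𝓝 t] fun s => c * Φ (δ * s) + c * δ * s * ψ (δ * s) :=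
    Filter.eventuallyEq_of_mem (hU.mem_nhds ht) fun s hs =>
      (hΦ s hs).const_mul_self_mul_comp_const_mul.deriv
  refine ((((hΦ t ht).comp_const_mul.const_mul c).add
    (hψ t ht).const_mul_self_mul_comp_const_mul).congr_of_eventuallyEq hderiv).congr_deriv ?_
  ring

end ScaledProduct

theorem second_derivative_of_G (n : ℕ) (hn : 3 ≤ n) (ρ δ : ℝ)
    (hρ : 0 < ρ) (hρ' : ρ < 1) (hδ : δ = ((n:ℝ) - 2)/(n:ℝ) * ρ)
    (G : ℝ → ℝ)
    (hG : ∀ t : ℝ, G t = ((n:ℝ) - 2)*ρ*t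
        * ∫ x in (-1:ℝ)..1, |δ*t - x| * (1 - x^2) ^ (((n:ℝ) - 3)/2) * x) :
    (∀ t ∈ Set.Ioo (-1:ℝ) 1, DifferentiableAt ℝ G t ∧ DifferentiableAt ℝ (deriv G) t) ∧
    ∀ t ∈ Set.Ioo (-1:ℝ) 1,
      deriv (deriv G) t
        = 2*((n:ℝ) - 2)*ρ*δ^3*t^2*(1 - δ^2*t^2) ^ (((n:ℝ) - 3)/2)
          - 4*((n:ℝ) - 2)/((n:ℝ) - 1)*ρ*δ*(1 - δ^2*t^2) ^ (((n:ℝ) - 1)/2) := by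
  have hn3 : (3 : ℝ) ≤ n := by exact_mod_cast hn
  set p : ℝ := ((n : ℝ) - 3) / 2
  have hp : 0 ≤ p := by positivity
  obtain ⟨hδ0, hδ1⟩ : 0 ≤ δ ∧ δ ≤ 1 := by
    rw [hδ]
    have hq : 0 ≤ ((n : ℝ) - 2) / n := div_nonneg (by linarith) (by linarith)
    have hq1 : ((n : ℝ) - 2) / n ≤ 1 := (div_le_one (by linarith)).2 (by linarith)
    exact ⟨mul_nonneg hq hρ.le, mul_le_one₀ hq1 hρ.le hρ'.le⟩
  have hδt : ∀ t ∈ Ioo (-1 : ℝ) 1, δ * t ∈ Ioo (-1 : ℝ) 1 := fun t ⟨h1, h2⟩ =>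
    ⟨by nlinarith, by nlinarith⟩
  set Φ : ℝ → ℝ := fun a => ∫ y in (-1:ℝ)..1, |a - y| * ((1 - y ^ 2) ^ p * y)
  set ψ : ℝ → ℝ := fun a => -(1 - a ^ 2) ^ (p + 1) / (p + 1)
  set c := ((n : ℝ) - 2) * ρ
  have hGΦ : G = fun t => c * t * Φ (δ * t) := funext fun t => by simp only [hG, Φ, mul_assoc]
  have hΦ : ∀ t ∈ Ioo (-1 : ℝ) 1, HasDerivAt Φ (ψ (δ * t)) (δ * t) :=
    fun t ht => hasDerivAt_integral_abs_sub_mul_one_sub_sq_rpow_mul_self hp (hδt t ht)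
  have hG'' := fun t (ht : t ∈ Ioo (-1 : ℝ) 1) =>
    hGΦ ▸ hasDerivAt_deriv_const_mul_self_mul_comp_const_mul
      (χ := fun a => 2 * ((1 - a ^ 2) ^ p * a))
      isOpen_Ioo hΦ (fun s _ => hasDerivAt_neg_one_sub_sq_rpow_succ_div hp _) ht
  refine ⟨fun t ht => ⟨hGΦ ▸ (hΦ t ht).const_mul_self_mul_comp_const_mul.differentiableAt,
    (hG'' t ht).differentiableAt⟩, fun t ht => ?_⟩
  have hp1 : p + 1 = ((n:ℝ) - 1) / 2 := by ring
  have : (n : ℝ) - 1 ≠ 0 := by linarith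
  rw [(hG'' t ht).deriv]
  simp only [ψ, c, hp1, mul_pow]
  field_simp
  ring
end
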